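/- arXiv:2305.12827 — 6 statements merged into one kernel-verified Lean document; each statement's English description precedes it below -/
import Mathlib

section
/- If a parametric function f : X × ℝ^m → ℝ^c satisfies the task arithmetic property around θ0 with respect to task vectors τ_1,…,τ_T and pairwise disjoint supports D_1,…,D_T (with admissible coefficient set 𝒜 = ℝ^T), then f is weight disentangled with respect to {τ_t} and {D_t}; explicitly, the functions g_t(x; α τ_t) = f(x; θ0 + α τ_t) · 1(x ∈ D_t) for t = 1,…,T and g_0(x) = f(x; θ0) · 1(x ∉ ⋃_t D_t) realize the weight-disentanglement decomposition. -/
open scoped Classical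
open Function

theorem sum_ite_mem_eq_of_pairwise_disjoint {ι X M : Type*} [Fintype ι] [AddCommMonoid M]
    {D : ι → Set X} (hD : Pairwise (Disjoint on D)) {x : X} {i : ι} (hx : x ∈ D i)
    (F : ι → M) : ∑ j, (if x ∈ D j then F j else 0) = F i := by
  rw [Finset.sum_eq_single_of_mem i (Finset.mem_univ i) fun j _ hji => ?_, if_pos hx]
  exact if_neg fun hxj => (hD hji).le_bot ⟨hxj, hx⟩

theorem eq_sum_ite_mem_add_ite_of_pairwise_disjoint {ι X M : Type*} [Fintype ι]
    [AddCommMonoid M] {D : ι → Set X} (hD : Pairwise (Disjoint on D)) {x : X} {y G : M}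
    {F : ι → M} (hin : ∀ i, x ∈ D i → y = F i) (hout : x ∉ ⋃ i, D i → y = G) :
    y = (∑ i, if x ∈ D i then F i else 0) + if x ∈ ⋃ i, D i then 0 else G := by
  by_cases hx : x ∈ ⋃ i, D i
  · obtain ⟨i, hxi⟩ := Set.mem_iUnion.mp hx
    rw [sum_ite_mem_eq_of_pairwise_disjoint hD hxi, if_pos hx, add_zero, hin i hxi]
  · have hsum : (∑ i, if x ∈ D i then F i else 0) = 0 :=
      Finset.sum_eq_zero fun i _ => if_neg fun hxi => hx (Set.mem_iUnion_of_mem i hxi)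
    rw [hsum, if_neg hx, zero_add, hout hx]

/-- If `f` satisfies the task arithmetic property around `θ0` w.r.t. task
vectors `τ t` and pairwise disjoint supports `D t` (with admissible coefficient set
`𝒜 = ℝ^T`), then `f` is weight disentangled w.r.t. `{τ t}` and `{D t}`; explicitly, the
functions `g t x θ' = f x (θ0 + θ') · 1(x ∈ D t)` and
`g0 x = f x θ0 · 1(x ∉ ⋃ t, D t)` realize the weight-disentanglement decomposition. -/
theorem task_arithmetic_implies_weight_disentanglement
    {X : Type*} {m c T : ℕ}
    (f : X → (Fin m → ℝ) → (Fin c → ℝ))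
    (θ0 : Fin m → ℝ) (τ : Fin T → (Fin m → ℝ)) (D : Fin T → Set X)
    (hdisj : ∀ t t' : Fin T, t ≠ t' → Disjoint (D t) (D t'))
    (hTA_in : ∀ α : Fin T → ℝ, ∀ t : Fin T, ∀ x ∈ D t,
      f x (θ0 + ∑ t', α t' • τ t') = f x (θ0 + α t • τ t))
    (hTA_out : ∀ α : Fin T → ℝ, ∀ x ∉ ⋃ t, D t,
      f x (θ0 + ∑ t', α t' • τ t') = f x θ0)
    (g : Fin T → X → (Fin m → ℝ) → (Fin c → ℝ)) (g0 : X → (Fin c → ℝ))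
    (hg : g = fun t x θ' => if x ∈ D t then f x (θ0 + θ') else 0)
    (hg0 : g0 = fun x => if x ∈ ⋃ t, D t then 0 else f x θ0) :
    (∀ α : Fin T → ℝ, ∀ x : X,
      f x (θ0 + ∑ t, α t • τ t) = (∑ t, g t x (α t • τ t)) + g0 x) ∧
    (∀ t : Fin T, ∀ x ∉ D t, ∀ α : ℝ, g t x (α • τ t) = 0) ∧
    (∀ x ∈ ⋃ t, D t, g0 x = 0) := by
  subst hg hg0
  refine ⟨fun α x => ?_, fun t x hx _ => if_neg hx, fun x hx => if_pos hx⟩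
  exact eq_sum_ite_mem_add_ite_of_pairwise_disjoint (fun t t' => hdisj t t')
    (fun t hx => hTA_in α t x hx) (hTA_out α x)
end

section
/- If a parametric function f : X × ℝ^m → ℝ^c is weight disentangled with respect to task vectors τ_1,…,τ_T and pairwise disjoint supports D_1,…,D_T, then f satisfies the task arithmetic property around θ0 with respect to {τ_t} and {D_t} with admissible coefficient set 𝒜 = ℝ^T; that is, for every (α_1,…,α_T) ∈ ℝ^T, f(x; θ0 + ∑_t α_t τ_t) = f(x; θ0 + α_t τ_t) whenever x ∈ D_t, and f(x; θ0 + ∑_t α_t τ_t) = f(x; θ0) whenever x ∉ ⋃_t D_t. -/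
/-! On `D t`, disentanglement leaves only the summand `g t x (α t • τ t)`, which sees the
coefficient `α t` alone, so the output is the same for `α` and for the coefficient vector
`Pi.single t (α t)`. Off `⋃ t, D t` only `g0 x` survives, so the output does not depend on
`α` at all and equals its value at `α = 0`. -/

section WeightDecomposition

open Function

variable {ι X M N : Type*} (R : Type*) [Fintype ι] [Semiring R] [AddCommMonoid M] [Module R M]
  [AddCommMonoid N]

structure IsWeightDecomposition (f : X → M → N) (θ0 : M) (τ : ι → M) (D : ι → Set X)
    (g : ι → X → M → N) (g0 : X → N) : Prop where
  apply_add_sum : ∀ (α : ι → R) (x : X),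
    f x (θ0 + ∑ t, α t • τ t) = ∑ t, g t x (α t • τ t) + g0 x
  component_eq_zero : ∀ t, ∀ x ∉ D t, ∀ a : R, g t x (a • τ t) = 0
  offset_eq_zero : ∀ x ∈ ⋃ t, D t, g0 x = 0

namespace IsWeightDecomposition

variable {R} {f : X → M → N} {θ0 : M} {τ : ι → M} {D : ι → Set X} {g : ι → X → M → N}
  {g0 : X → N}

theorem apply_eq_component (h : IsWeightDecomposition R f θ0 τ D g g0)
    (hD : Pairwise (Disjoint on D)) (α : ι → R) {t : ι} {x : X} (hx : x ∈ D t) :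
    f x (θ0 + ∑ t', α t' • τ t') = g t x (α t • τ t) := by
  have hothers : ∀ t' ∈ Finset.univ, t' ≠ t → g t' x (α t' • τ t') = 0 := fun t' _ ht' =>
    h.component_eq_zero t' x (Set.disjoint_left.mp (hD ht') · hx) (α t')
  rw [h.apply_add_sum, h.offset_eq_zero x (Set.mem_iUnion_of_mem t hx), add_zero,
    Finset.sum_eq_single_of_mem t (Finset.mem_univ t) hothers]

theorem apply_eq_offset (h : IsWeightDecomposition R f θ0 τ D g g0) (α : ι → R) {x : X}
    (hx : x ∉ ⋃ t, D t) : f x (θ0 + ∑ t, α t • τ t) = g0 x := by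
  have hcomponents : ∀ t ∈ Finset.univ, g t x (α t • τ t) = 0 := fun t _ =>
    h.component_eq_zero t x (fun hxt => hx (Set.mem_iUnion_of_mem t hxt)) (α t)
  rw [h.apply_add_sum, Finset.sum_eq_zero hcomponents, zero_add]

theorem apply_eq_apply_single [DecidableEq ι] (h : IsWeightDecomposition R f θ0 τ D g g0)
    (hD : Pairwise (Disjoint on D)) (α : ι → R) {t : ι} {x : X} (hx : x ∈ D t) :
    f x (θ0 + ∑ t', α t' • τ t') = f x (θ0 + α t • τ t) := by
  have hsingle := h.apply_eq_component hD (Pi.single t (α t)) hx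
  have hcoeffs : ∑ t', (Pi.single t (α t) : ι → R) t' • τ t' = α t • τ t :=
    Fintype.linearCombination_apply_single R τ t (α t)
  rw [hcoeffs, Pi.single_eq_same] at hsingle
  rw [hsingle, h.apply_eq_component hD α hx]

theorem apply_eq_apply_base (h : IsWeightDecomposition R f θ0 τ D g g0) (α : ι → R) {x : X}
    (hx : x ∉ ⋃ t, D t) : f x (θ0 + ∑ t, α t • τ t) = f x θ0 := by
  have hzero := h.apply_eq_offset 0 hx
  simp only [Pi.zero_apply, zero_smul, Finset.sum_const_zero, add_zero] at hzero
  rw [hzero, h.apply_eq_offset α hx]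

end IsWeightDecomposition

end WeightDecomposition

/-- If `f` is weight disentangled w.r.t. task vectors `τ t` and pairwise
disjoint supports `D t`, then `f` satisfies the task arithmetic property around `θ0`
w.r.t. `{τ t}` and `{D t}` with admissible coefficient set `𝒜 = ℝ^T`. -/
theorem weight_disentanglement_implies_task_arithmetic
    {X : Type*} {m c T : ℕ}
    (f : X → (Fin m → ℝ) → (Fin c → ℝ))
    (θ0 : Fin m → ℝ) (τ : Fin T → (Fin m → ℝ)) (D : Fin T → Set X)
    (hdisj : ∀ t t' : Fin T, t ≠ t' → Disjoint (D t) (D t'))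
    (hWD : ∃ (g : Fin T → X → (Fin m → ℝ) → (Fin c → ℝ)) (g0 : X → (Fin c → ℝ)),
      (∀ α : Fin T → ℝ, ∀ x : X,
        f x (θ0 + ∑ t, α t • τ t) = (∑ t, g t x (α t • τ t)) + g0 x) ∧
      (∀ t : Fin T, ∀ x ∉ D t, ∀ α : ℝ, g t x (α • τ t) = 0) ∧
      (∀ x ∈ ⋃ t, D t, g0 x = 0)) :
    (∀ α : Fin T → ℝ, ∀ t : Fin T, ∀ x ∈ D t,
      f x (θ0 + ∑ t', α t' • τ t') = f x (θ0 + α t • τ t)) ∧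
    (∀ α : Fin T → ℝ, ∀ x ∉ ⋃ t, D t,
      f x (θ0 + ∑ t', α t' • τ t') = f x θ0) := by
  obtain ⟨g, g0, happly, hcomponent, hoffset⟩ := hWD
  have hdec : IsWeightDecomposition ℝ f θ0 τ D g g0 := ⟨happly, hcomponent, hoffset⟩
  exact ⟨fun α _ _ hx => hdec.apply_eq_apply_single hdisj α hx,
    fun α _ hx => hdec.apply_eq_apply_base α hx⟩
end

section
/- (Necessity step in the proof of Proposition C.2.) Suppose that for each t' ∈ {1,…,T} the family {φ_ρ} is locally linearly independent on D_{t'} in the summable sense, and that the family of task functions {f_t} satisfies the task arithmetic property on {D_t}. Then for every t' ∈ {1,…,T} and every ρ ∈ ℕ, either ∑_{t ≠ t'} c_{t,ρ} = 0 or φ_ρ(x) = 0 for all x ∈ D_{t'}. -/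
open Finset

theorem Finset.sum_filter_ne_eq_zero_of_sum_eq {ι M : Type*} [Fintype ι] [DecidableEq ι]
    [AddCommGroup M] {g : ι → M} {i : ι} (h : ∑ j, g j = g i) :
    ∑ j ∈ univ.filter (· ≠ i), g j = 0 := by
  rw [filter_ne', ← add_right_inj (g i), add_sum_erase _ _ (mem_univ i), h, add_zero]

theorem hasSum_finset_sum_mul {ι β R : Type*} [NonUnitalNonAssocSemiring R] [TopologicalSpace R]
    [ContinuousAdd R] (s : Finset ι) (c : ι → β → R) (v : β → R)
    (hc : ∀ i ∈ s, Summable fun b => c i b * v b) :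
    HasSum (fun b => (∑ i ∈ s, c i b) * v b) (∑ i ∈ s, ∑' b, c i b * v b) := by
  simpa only [sum_mul] using hasSum_sum fun i hi => (hc i hi).hasSum

theorem task_arithmetic_forces_vanishing_cross_coefficients_general
    {X : Type*} {T : ℕ}
    (D : Fin T → Set X)
    (φ : ℕ → X → ℝ) (c : Fin T → ℕ → ℝ)
    (hsum : ∀ (t : Fin T) (x : X), Summable fun ρ => c t ρ * φ ρ x)
    (f : Fin T → X → ℝ)
    (hf : ∀ (t : Fin T) (x : X), f t x = ∑' ρ, c t ρ * φ ρ x)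
    (hLLI : ∀ t' : Fin T, ∀ b : ℕ → ℝ,
      (∀ x ∈ D t', Summable fun ρ => b ρ * φ ρ x) →
      (∀ x ∈ D t', ∑' ρ, b ρ * φ ρ x = 0) →
      ∀ ρ : ℕ, b ρ = 0 ∨ ∀ x ∈ D t', φ ρ x = 0)
    (hTA : ∀ t' : Fin T, ∀ x ∈ D t', ∑ t, f t x = f t' x) :
    ∀ (t' : Fin T) (ρ : ℕ),
      (∑ t ∈ Finset.univ.filter (· ≠ t'), c t ρ) = 0 ∨
      ∀ x ∈ D t', φ ρ x = 0 := by
  intro t' ρ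
  have hcross (x : X) := hasSum_finset_sum_mul (univ.filter (· ≠ t')) c (φ · x)
    fun t _ => hsum t x
  refine hLLI t' _ (fun x _ => (hcross x).summable) (fun x hx => ?_) ρ
  rw [(hcross x).tsum_eq]
  simp only [← hf]
  exact sum_filter_ne_eq_zero_of_sum_eq (hTA t' x hx)

/-- necessity step in the proof of Proposition C.2: if `{φ ρ}` is locally
linearly independent (in the summable sense) on each `D t'` and the task functions
satisfy the task arithmetic property, then for every `t'` and every `ρ`, either
`∑_{t ≠ t'} c t ρ = 0` or `φ ρ` vanishes on `D t'`. -/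
theorem task_arithmetic_forces_vanishing_cross_coefficients
    {X : Type*} {T : ℕ}
    (D : Fin T → Set X)
    (hdisj : ∀ t t' : Fin T, t ≠ t' → Disjoint (D t) (D t'))
    (φ : ℕ → X → ℝ) (c : Fin T → ℕ → ℝ)
    (hsum : ∀ (t : Fin T) (x : X), Summable fun ρ => c t ρ * φ ρ x)
    (f : Fin T → X → ℝ)
    (hf : ∀ (t : Fin T) (x : X), f t x = ∑' ρ, c t ρ * φ ρ x)
    (hLLI : ∀ t' : Fin T, ∀ b : ℕ → ℝ,
      (∀ x ∈ D t', Summable fun ρ => b ρ * φ ρ x) →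
      (∀ x ∈ D t', ∑' ρ, b ρ * φ ρ x = 0) →
      ∀ ρ : ℕ, b ρ = 0 ∨ ∀ x ∈ D t', φ ρ x = 0)
    (hTA : ∀ t' : Fin T, ∀ x ∈ D t', ∑ t, f t x = f t' x) :
    ∀ (t' : Fin T) (ρ : ℕ),
      (∑ t ∈ Finset.univ.filter (· ≠ t'), c t ρ) = 0 ∨
      ∀ x ∈ D t', φ ρ x = 0 :=
  task_arithmetic_forces_vanishing_cross_coefficients_general D φ c hsum f hf hLLI hTA
end

section
/- (Proposition C.2 for two tasks.) Let T = 2 and assume X = D_1 ∪ D_2 with D_1 and D_2 disjoint. Suppose the family {φ_ρ} is locally linearly independent, in the summable sense, on D_1 and on D_2. Then the task functions {f_1, f_2} satisfy the task arithmetic property on {D_1, D_2} (i.e., f_1(x) + f_2(x) = f_1(x) for all x ∈ D_1 and f_1(x) + f_2(x) = f_2(x) for all x ∈ D_2) if and only if for every t ∈ {1,2} and every ρ ∈ ℕ, either c_{t,ρ} = 0 or the support of φ_ρ is contained in D_t (i.e., φ_ρ(x) = 0 for all x ∉ D_t). -/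
/-!
On `D₁` the task arithmetic identity says exactly that `f₂ = ∑' ρ, c₂ ρ * φ ρ` vanishes there,
and local linear independence of `{φ ρ}` on `D₁` turns this into the coefficientwise statement
`c₂ ρ = 0 ∨ φ ρ = 0 on D₁`; since `D₁` and `D₂` are complementary, vanishing on `D₁` means being
supported in `D₂`. Symmetrically on `D₂`.
-/

def LocallyLinearIndepOn {ι X R : Type*} [NonUnitalNonAssocSemiring R] [TopologicalSpace R]
    (φ : ι → X → R) (D : Set X) : Prop :=
  ∀ b : ι → R, (∀ x ∈ D, Summable fun ρ => b ρ * φ ρ x) →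
    (∀ x ∈ D, ∑' ρ, b ρ * φ ρ x = 0) → ∀ ρ, b ρ = 0 ∨ ∀ x ∈ D, φ ρ x = 0

section

variable {ι X R : Type*} [NonUnitalNonAssocSemiring R] [TopologicalSpace R]
  {φ : ι → X → R} {c : ι → R} {D : Set X}

theorem tsum_mul_eq_zero_of_forall (h : ∀ ρ, c ρ = 0 ∨ ∀ x ∈ D, φ ρ x = 0) {x : X} (hx : x ∈ D) :
    ∑' ρ, c ρ * φ ρ x = 0 := by
  refine (tsum_congr fun ρ => ?_).trans tsum_zero
  rcases h ρ with hc | hφ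
  · rw [hc, zero_mul]
  · rw [hφ x hx, mul_zero]

theorem LocallyLinearIndepOn.forall_tsum_eq_zero_iff (hφ : LocallyLinearIndepOn φ D)
    (hsum : ∀ x ∈ D, Summable fun ρ => c ρ * φ ρ x) :
    (∀ x ∈ D, ∑' ρ, c ρ * φ ρ x = 0) ↔ ∀ ρ, c ρ = 0 ∨ ∀ x ∈ D, φ ρ x = 0 :=
  ⟨hφ c hsum, fun h _ => tsum_mul_eq_zero_of_forall h⟩

end

/-- Proposition C.2 for two tasks: with `X = D1 ∪ D2` disjoint and `{φ ρ}`
locally linearly independent (in the summable sense) on `D1` and on `D2`, the task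
functions `f1, f2` satisfy the task arithmetic property on `{D1, D2}` if and only if for
every task and every `ρ`, either the coefficient vanishes or `φ ρ` is supported in the
corresponding domain. -/
theorem task_arithmetic_iff_localization_two_tasks
    {X : Type*}
    (D1 D2 : Set X) (hdisj : Disjoint D1 D2) (hcover : D1 ∪ D2 = Set.univ)
    (φ : ℕ → X → ℝ) (c1 c2 : ℕ → ℝ)
    (hsum1 : ∀ x : X, Summable fun ρ => c1 ρ * φ ρ x)
    (hsum2 : ∀ x : X, Summable fun ρ => c2 ρ * φ ρ x)
    (f1 f2 : X → ℝ)
    (hf1 : ∀ x : X, f1 x = ∑' ρ, c1 ρ * φ ρ x)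
    (hf2 : ∀ x : X, f2 x = ∑' ρ, c2 ρ * φ ρ x)
    (hLLI1 : ∀ b : ℕ → ℝ,
      (∀ x ∈ D1, Summable fun ρ => b ρ * φ ρ x) →
      (∀ x ∈ D1, ∑' ρ, b ρ * φ ρ x = 0) →
      ∀ ρ : ℕ, b ρ = 0 ∨ ∀ x ∈ D1, φ ρ x = 0)
    (hLLI2 : ∀ b : ℕ → ℝ,
      (∀ x ∈ D2, Summable fun ρ => b ρ * φ ρ x) →
      (∀ x ∈ D2, ∑' ρ, b ρ * φ ρ x = 0) →
      ∀ ρ : ℕ, b ρ = 0 ∨ ∀ x ∈ D2, φ ρ x = 0) :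
    ((∀ x ∈ D1, f1 x + f2 x = f1 x) ∧ (∀ x ∈ D2, f1 x + f2 x = f2 x)) ↔
      (∀ ρ : ℕ, (c1 ρ = 0 ∨ ∀ x ∉ D1, φ ρ x = 0) ∧
                (c2 ρ = 0 ∨ ∀ x ∉ D2, φ ρ x = 0)) := by
  have hφ1 : LocallyLinearIndepOn φ D1 := hLLI1
  have hφ2 : LocallyLinearIndepOn φ D2 := hLLI2
  have hcompl : IsCompl D1 D2 := ⟨hdisj, codisjoint_iff.mpr hcover⟩
  simp only [add_eq_left, add_eq_right, hf1, hf2,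
    hφ1.forall_tsum_eq_zero_iff fun x _ => hsum2 x,
    hφ2.forall_tsum_eq_zero_iff fun x _ => hsum1 x,
    ← Set.mem_compl_iff, hcompl.compl_eq, hcompl.symm.compl_eq, forall_and]
  exact and_comm
end

section
/- (Remark after Proposition 1: locally linearly independent, non-localized eigenfunctions preclude task arithmetic; two-task version.) Let T = 2 and assume X = D_1 ∪ D_2 with D_1 and D_2 disjoint. Suppose the family {φ_ρ} is locally linearly independent on D_2 in the summable sense, and suppose there exists ρ ∈ ℕ with c_{1,ρ} ≠ 0 and such that φ_ρ does not vanish identically on D_2. Then the task functions {f_1, f_2} do not satisfy the task arithmetic property on {D_1, D_2}; in particular, there exists x ∈ D_2 with f_1(x) + f_2(x) ≠ f_2(x). -/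
/-- Remark after Proposition 1, two-task version: with `X = D1 ∪ D2`
disjoint and `{φ ρ}` locally linearly independent on `D2` in the summable sense, if some
eigenfunction with nonzero coefficient `c1 ρ ≠ 0` does not vanish identically on `D2`,
then `{f1, f2}` do not satisfy the task arithmetic property on `{D1, D2}`; in particular
there is `x ∈ D2` with `f1 x + f2 x ≠ f2 x`. -/
theorem non_localized_eigenfunctions_preclude_task_arithmetic
    {X : Type*}
    (D1 D2 : Set X) (hdisj : Disjoint D1 D2) (hcover : D1 ∪ D2 = Set.univ)
    (φ : ℕ → X → ℝ) (c1 c2 : ℕ → ℝ)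
    (hsum1 : ∀ x : X, Summable fun ρ => c1 ρ * φ ρ x)
    (hsum2 : ∀ x : X, Summable fun ρ => c2 ρ * φ ρ x)
    (f1 f2 : X → ℝ)
    (hf1 : ∀ x : X, f1 x = ∑' ρ, c1 ρ * φ ρ x)
    (hf2 : ∀ x : X, f2 x = ∑' ρ, c2 ρ * φ ρ x)
    (hLLI2 : ∀ b : ℕ → ℝ,
      (∀ x ∈ D2, Summable fun ρ => b ρ * φ ρ x) →
      (∀ x ∈ D2, ∑' ρ, b ρ * φ ρ x = 0) →
      ∀ ρ : ℕ, b ρ = 0 ∨ ∀ x ∈ D2, φ ρ x = 0)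
    (hρ : ∃ ρ : ℕ, c1 ρ ≠ 0 ∧ ∃ x ∈ D2, φ ρ x ≠ 0) :
    (¬ ((∀ x ∈ D1, f1 x + f2 x = f1 x) ∧ (∀ x ∈ D2, f1 x + f2 x = f2 x))) ∧
    (∃ x ∈ D2, f1 x + f2 x ≠ f2 x) := by
  obtain ⟨ρ, hc, x0, hx0, hφ⟩ := hρ
  have key : ∃ x ∈ D2, f1 x + f2 x ≠ f2 x := by
    by_contra h
    push_neg at h
    have hz : ∀ x ∈ D2, ∑' ρ, c1 ρ * φ ρ x = 0 := by
      intro x hx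
      have := h x hx
      rw [hf1 x] at this
      linarith
    rcases hLLI2 c1 (fun x _ => hsum1 x) hz ρ with h1 | h2
    · exact hc h1
    · exact hφ (h2 x0 hx0)
  refine ⟨fun ⟨_, h2⟩ => ?_, key⟩
  obtain ⟨x, hx, hne⟩ := key
  exact hne (h2 x hx)
end

section
/- (Task arithmetic for linearized models is equivalent to localization of the functional increments.) Let f_lin : X × ℝ^m → ℝ^c be a model that is affine in its parameters around θ0, i.e., f_lin(x; θ0 + θ') = f0(x) + J(x) θ' for some f0 : X → ℝ^c and a family of linear maps J(x) : ℝ^m → ℝ^c. Let τ_1,…,τ_T ∈ ℝ^m be task vectors and D_1,…,D_T ⊆ X pairwise disjoint supports. Then f_lin satisfies the task arithmetic property around θ0 with respect to {τ_t} and {D_t} with admissible coefficient set 𝒜 = ℝ^T if and only if for every t ∈ {1,…,T} and every x ∉ D_t, J(x) τ_t = 0. -/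
/-- for a model affine in its parameters around `θ0`,
`f x (θ0 + θ') = f0 x + J x θ'`, the task arithmetic property around `θ0` w.r.t. task
vectors `τ t` and pairwise disjoint supports `D t` (with `𝒜 = ℝ^T`) holds if and only if
`J x (τ t) = 0` for every `t` and every `x ∉ D t`. -/
theorem linearized_task_arithmetic_iff_jacobian_localization
    {X : Type*} {m c T : ℕ}
    (f : X → (Fin m → ℝ) → (Fin c → ℝ))
    (θ0 : Fin m → ℝ) (f0 : X → (Fin c → ℝ))
    (J : X → (Fin m → ℝ) →ₗ[ℝ] (Fin c → ℝ))
    (hlin : ∀ (x : X) (θ' : Fin m → ℝ), f x (θ0 + θ') = f0 x + J x θ')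
    (τ : Fin T → (Fin m → ℝ)) (D : Fin T → Set X)
    (hdisj : ∀ t t' : Fin T, t ≠ t' → Disjoint (D t) (D t')) :
    ((∀ α : Fin T → ℝ, ∀ t : Fin T, ∀ x ∈ D t,
        f x (θ0 + ∑ t', α t' • τ t') = f x (θ0 + α t • τ t)) ∧
     (∀ α : Fin T → ℝ, ∀ x ∉ ⋃ t, D t,
        f x (θ0 + ∑ t', α t' • τ t') = f x θ0)) ↔
      (∀ t : Fin T, ∀ x ∉ D t, J x (τ t) = 0) := by
  have hsingle : ∀ t : Fin T, (∑ t', ((Pi.single t 1 : Fin T → ℝ)) t' • τ t') = τ t := by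
    intro t
    rw [Finset.sum_eq_single t]
    · simp
    · intro b _ hb; simp [Pi.single_eq_of_ne hb]
    · simp
  constructor
  · rintro ⟨h1, h2⟩ t x hx
    by_cases hx' : ∃ s, x ∈ D s
    · obtain ⟨s, hs⟩ := hx'
      have hst : s ≠ t := fun h => hx (h ▸ hs)
      have := h1 (Pi.single t 1 : Fin T → ℝ) s x hs
      rw [hsingle, Pi.single_eq_of_ne hst, zero_smul, hlin, hlin] at this
      simpa using this
    · push_neg at hx'
      have := h2 (Pi.single t 1 : Fin T → ℝ) x (by simpa using hx')
      rw [hsingle, hlin] at this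
      have h0 : f x θ0 = f0 x + J x 0 := by
        simpa using hlin x 0
      rw [h0] at this
      simpa using this
  · intro h
    constructor
    · intro α t x hx
      rw [hlin, hlin, map_sum]
      congr 1
      rw [Finset.sum_eq_single t]
      · intro b _ hb
        have hxb : x ∉ D b := fun hxb =>
          (hdisj b t hb).le_bot ⟨hxb, hx⟩
        rw [map_smul, h b x hxb, smul_zero]
      · simp
    · intro α x hx
      simp only [Set.mem_iUnion, not_exists] at hx
      rw [hlin]
      have h0 : f x θ0 = f0 x + J x 0 := by simpa using hlin x 0
      rw [h0, map_zero, map_sum]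
      congr 1
      apply Finset.sum_eq_zero
      intro t _
      rw [map_smul, h t x (hx t), smul_zero]
end
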